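/- Let V be a finite-dimensional real inner product space and let α₁, …, α_n be a basis of V such that ⟨α_i, α_j⟩ ≤ 0 for all i ≠ j. Let I ⊆ {1, …, n}, let V_I = span{α_i : i ∈ I}, let (ϖ_i)_{i ∈ I} be the basis of V_I dual to (α_i)_{i ∈ I} within V_I (i.e. ⟨ϖ_i, α_j⟩ = δ_{ij} for i, j ∈ I), and let p : V → V_I^⊥ be the orthogonal projection. Suppose Y ∈ V satisfies: (1) ⟨ϖ_i, Y⟩ ≤ 0 for all i ∈ I, and (2) ⟨α_j, p(Y)⟩ > 0 for all j ∉ I. Then ⟨α_j, Y⟩ > 0 for all j ∉ I. -/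

import Mathlib

/-!
Write `Y = X + Z` with `X ∈ V_I` and `Z = p(Y) ∈ V_Iᗮ`. Duality gives `X = ∑_{i ∈ I} ⟨ϖ_i, Y⟩ α_i`,
a combination with nonpositive coefficients of vectors making an obtuse angle with each `α_j`,
`j ∉ I`; hence `⟨α_j, X⟩ ≥ 0` and `⟨α_j, Y⟩ ≥ ⟨α_j, p(Y)⟩ > 0`.
-/

open RealInnerProductSpace

section DualCoordinates

variable {V ι : Type*} [NormedAddCommGroup V] [InnerProductSpace ℝ V] [DecidableEq ι]
  {v ϖ : ι → V} {s : Set ι}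

theorem inner_linearCombination_of_dual
    (hdual : ∀ i ∈ s, ∀ k ∈ s, ⟪ϖ i, v k⟫ = if i = k then 1 else 0)
    {l : ι →₀ ℝ} (hl : l ∈ Finsupp.supported ℝ ℝ s) {i : ι} (hi : i ∈ s) :
    ⟪ϖ i, Finsupp.linearCombination ℝ v l⟫ = l i := by
  rw [Finsupp.linearCombination_apply, Finsupp.sum, inner_sum,
    Finset.sum_eq_single i]
  · rw [real_inner_smul_right, hdual i hi i hi, if_pos rfl, mul_one]
  · intro k hk hki
    rw [real_inner_smul_right, hdual i hi k (hl (Finset.mem_coe.mpr hk)), if_neg (Ne.symm hki),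
      mul_zero]
  · intro hi'
    rw [Finsupp.notMem_support_iff.mp hi', zero_smul, inner_zero_right]

theorem inner_nonneg_of_mem_span_of_dual {j : ι} (hobtuse : ∀ i ∈ s, ⟪v j, v i⟫ ≤ 0)
    (hdual : ∀ i ∈ s, ∀ k ∈ s, ⟪ϖ i, v k⟫ = if i = k then 1 else 0)
    {x : V} (hx : x ∈ Submodule.span ℝ (v '' s)) (hcoord : ∀ i ∈ s, ⟪ϖ i, x⟫ ≤ 0) :
    0 ≤ ⟪v j, x⟫ := by
  obtain ⟨l, hl, rfl⟩ := Finsupp.mem_span_image_iff_linearCombination ℝ |>.mp hx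
  rw [Finsupp.linearCombination_apply, Finsupp.sum, inner_sum]
  refine Finset.sum_nonneg fun i hi => ?_
  have his : i ∈ s := hl (Finset.mem_coe.mpr hi)
  rw [real_inner_smul_right]
  exact mul_nonneg_of_nonpos_of_nonpos
    (inner_linearCombination_of_dual hdual hl his ▸ hcoord i his) (hobtuse i his)

end DualCoordinates

theorem regular_outside_of_obtuse_basis {V : Type*} [NormedAddCommGroup V]
    [InnerProductSpace ℝ V] [FiniteDimensional ℝ V] {n : ℕ}
    (b : Module.Basis (Fin n) ℝ V)
    (hobtuse : ∀ i j, i ≠ j → ⟪b i, b j⟫ ≤ 0)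
    (I : Set (Fin n)) (ϖ : Fin n → V)
    (hϖmem : ∀ i ∈ I, ϖ i ∈ Submodule.span ℝ (⇑b '' I))
    (hdual : ∀ i ∈ I, ∀ j ∈ I, ⟪ϖ i, b j⟫ = if i = j then 1 else 0)
    (Y : V)
    (h1 : ∀ i ∈ I, ⟪ϖ i, Y⟫ ≤ 0)
    (h2 : ∀ j ∉ I,
      0 < ⟪b j, ((Submodule.orthogonalProjectionOnto (Submodule.span ℝ (⇑b '' I))ᗮ Y : V))⟫) :
    ∀ j ∉ I, 0 < ⟪b j, Y⟫ := by
  intro j hj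
  set W := Submodule.span ℝ (⇑b '' I)
  set Z : V := Wᗮ.orthogonalProjectionOnto Y
  have hZ : Z ∈ Wᗮ := (Wᗮ.orthogonalProjectionOnto Y).2
  have hYZ : Y - Z ∈ W := W.orthogonal_orthogonal ▸ Wᗮ.sub_starProjection_mem_orthogonal Y
  have hcoord : ∀ i ∈ I, ⟪ϖ i, Y - Z⟫ ≤ 0 := fun i hi => by
    rw [inner_sub_right, Submodule.inner_right_of_mem_orthogonal (hϖmem i hi) hZ, sub_zero]
    exact h1 i hi
  have hX : 0 ≤ ⟪b j, Y - Z⟫ := inner_nonneg_of_mem_span_of_dual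
    (fun i hi => hobtuse j i fun h => hj (h ▸ hi)) hdual hYZ hcoord
  rw [inner_sub_right] at hX
  linarith [h2 j hj]
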